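/- The map p : FC_{Bb} → AC2 given by second projection composed with the rule p(B,u) = u and p(X,b) = b for X ∈ {T,F,N} (i.e., p(v0,v1) = v1) is a strong surjective homomorphism of matrices from FC_{Bb} onto AC2. -/

import Mathlib

inductive FDE : Type
  | B | T | F | N
deriving DecidableEq

instance : Fintype FDE := ⟨⟨↑[FDE.B, FDE.T, FDE.F, FDE.N], by decide⟩, fun x => by cases x <;> decide⟩

def fdeNeg : FDE → FDE
  | .B => .B | .T => .F | .F => .T | .N => .N

def fdeAnd : FDE → FDE → FDE
  | .B, .B => .B | .B, .T => .B | .B, .F => .F | .B, .N => .F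
  | .T, .B => .B | .T, .T => .T | .T, .F => .F | .T, .N => .N
  | .F, _ => .F
  | .N, .B => .F | .N, .T => .N | .N, .F => .F | .N, .N => .N

def fdeOr : FDE → FDE → FDE
  | .B, .B => .B | .B, .T => .T | .B, .F => .B | .B, .N => .T
  | .T, _ => .T
  | .F, .B => .B | .F, .T => .T | .F, .F => .F | .F, .N => .N
  | .N, .B => .T | .N, .T => .T | .N, .F => .N | .N, .N => .N
inductive AC2 : Type
  | b | t | f | n
deriving DecidableEq

instance : Fintype AC2 := ⟨⟨↑[AC2.b, AC2.t, AC2.f, AC2.n], by decide⟩, fun x => by cases x <;> decide⟩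

def acNeg : AC2 → AC2
  | .b => .b | .t => .f | .f => .t | .n => .n

def acAnd : AC2 → AC2 → AC2
  | .b, _ => .b
  | _, .b => .b
  | .n, x => x
  | x, .n => x
  | .t, .t => .t
  | .f, .f => .f
  | .t, .f => .b
  | .f, .t => .b

def acOr : AC2 → AC2 → AC2
  | .b, _ => .b
  | _, .b => .b
  | .n, x => x
  | x, .n => x
  | .t, .t => .t
  | .f, .f => .f
  | .t, .f => .b
  | .f, .t => .b
abbrev FC := FDE × AC2

def fcNeg (v : FC) : FC := (fdeNeg v.1, acNeg v.2)
def fcAnd (x y : FC) : FC := (fdeAnd x.1 y.1, acAnd x.2 y.2)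
def fcOr (x y : FC) : FC := (fdeOr x.1 y.1, acOr x.2 y.2)
def fcDes (v : FC) : Bool :=
  decide ((v.1 = FDE.T ∨ v.1 = FDE.B) ∧ (v.2 = AC2.f ∨ v.2 = AC2.n))
/-- The collapse map h_{Bb}. -/
def hBb (v : FC) : FC := if v.1 = FDE.B then v else (v.1, AC2.b)

def inBb (v : FC) : Bool := decide (v.1 = FDE.B ∨ v.2 = AC2.b)

/-- The carrier of the 7-valued matrix FC_{Bb}: {Bb, Bt, Bf, Bn, Tb, Fb, Nb}. -/
def FCBb := {v : FC // inBb v = true}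

theorem hBb_mem : ∀ v : FC, inBb (hBb v) = true := by decide

def bbNeg (x : FCBb) : FCBb := ⟨hBb (fcNeg x.1), hBb_mem _⟩
def bbAnd (x y : FCBb) : FCBb := ⟨hBb (fcAnd x.1 y.1), hBb_mem _⟩
def bbOr (x y : FCBb) : FCBb := ⟨hBb (fcOr x.1 y.1), hBb_mem _⟩
def bbDes (x : FCBb) : Bool := fcDes x.1

/-- The projection p : FC_{Bb} → AC2, p(v₀,v₁) = v₁. -/
def pmap (x : FCBb) : AC2 := x.1.2

def acDes (v : AC2) : Bool := decide (v = AC2.f ∨ v = AC2.n)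

/-!
The subset {Bb, Bt, Bf, Bn, Tb, Fb, Nb} of FC is already closed under the operations of FC,
because B is fixed by ¬, ∧, ∨ of FDE and b is absorbing in AC2. So the collapse h_{Bb} acts as
the identity on results, and p is the restriction of the second projection FC → AC2, which
commutes with the operations by definition of the product. Every value (X, u) with u ≠ b has
X = B, so designation in FC_{Bb} reduces to designation of the second coordinate, and the
values (B, u) witness surjectivity.
-/

theorem inBb_iff {v : FC} : inBb v = true ↔ v.1 = FDE.B ∨ v.2 = AC2.b := by
  simp [inBb]

theorem hBb_of_inBb {v : FC} (hv : inBb v = true) : hBb v = v := by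
  obtain ⟨X, u⟩ := v
  rcases inBb_iff.mp hv with rfl | rfl <;> simp [hBb]

theorem fst_eq_B_of_inBb {v : FC} (hv : inBb v = true) (hb : v.2 ≠ AC2.b) : v.1 = FDE.B :=
  (inBb_iff.mp hv).resolve_right hb

theorem acAnd_b_left (u : AC2) : acAnd AC2.b u = AC2.b := rfl

theorem acAnd_b_right (u : AC2) : acAnd u AC2.b = AC2.b := by cases u <;> rfl

theorem acOr_b_left (u : AC2) : acOr AC2.b u = AC2.b := rfl

theorem acOr_b_right (u : AC2) : acOr u AC2.b = AC2.b := by cases u <;> rfl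

theorem inBb_fcNeg {v : FC} (hv : inBb v = true) : inBb (fcNeg v) = true := by
  rcases inBb_iff.mp hv with h | h <;> simp [inBb, fcNeg, fdeNeg, acNeg, h]

theorem inBb_prod_of_absorbing {f : FDE → FDE → FDE} {g : AC2 → AC2 → AC2}
    (hf : f FDE.B FDE.B = FDE.B) (hg_left : ∀ u, g AC2.b u = AC2.b)
    (hg_right : ∀ u, g u AC2.b = AC2.b) {v w : FC} (hv : inBb v = true) (hw : inBb w = true) :
    inBb (f v.1 w.1, g v.2 w.2) = true := by
  rw [inBb_iff]
  rcases inBb_iff.mp hv with hv | hv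
  · rcases inBb_iff.mp hw with hw | hw
    · simp [hv, hw, hf]
    · simp [hw, hg_right]
  · simp [hv, hg_left]

theorem inBb_fcAnd {v w : FC} (hv : inBb v = true) (hw : inBb w = true) :
    inBb (fcAnd v w) = true :=
  inBb_prod_of_absorbing rfl acAnd_b_left acAnd_b_right hv hw

theorem inBb_fcOr {v w : FC} (hv : inBb v = true) (hw : inBb w = true) :
    inBb (fcOr v w) = true :=
  inBb_prod_of_absorbing rfl acOr_b_left acOr_b_right hv hw

theorem pmap_surjective : Function.Surjective pmap :=
  fun u => ⟨⟨(FDE.B, u), inBb_iff.mpr (Or.inl rfl)⟩, rfl⟩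

theorem pmap_bbNeg (x : FCBb) : pmap (bbNeg x) = acNeg (pmap x) :=
  congrArg Prod.snd (hBb_of_inBb (inBb_fcNeg x.2))

theorem pmap_bbAnd (x y : FCBb) : pmap (bbAnd x y) = acAnd (pmap x) (pmap y) :=
  congrArg Prod.snd (hBb_of_inBb (inBb_fcAnd x.2 y.2))

theorem pmap_bbOr (x y : FCBb) : pmap (bbOr x y) = acOr (pmap x) (pmap y) :=
  congrArg Prod.snd (hBb_of_inBb (inBb_fcOr x.2 y.2))

theorem bbDes_iff_acDes_pmap (x : FCBb) : bbDes x = true ↔ acDes (pmap x) = true := by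
  obtain ⟨⟨X, u⟩, hx⟩ := x
  unfold bbDes fcDes acDes pmap
  rw [decide_eq_true_iff, decide_eq_true_iff]
  refine ⟨And.right, fun hu => ⟨Or.inr (fst_eq_B_of_inBb hx ?_), hu⟩⟩
  rcases hu with rfl | rfl <;> simp

/-- p is a strong surjective homomorphism from FC_{Bb} onto AC2. -/
theorem pmap_strong_epimorphism :
    Function.Surjective pmap ∧
    (∀ x : FCBb, pmap (bbNeg x) = acNeg (pmap x)) ∧
    (∀ x y : FCBb, pmap (bbAnd x y) = acAnd (pmap x) (pmap y)) ∧
    (∀ x y : FCBb, pmap (bbOr x y) = acOr (pmap x) (pmap y)) ∧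
    (∀ x : FCBb, bbDes x = true ↔ acDes (pmap x) = true) :=
  ⟨pmap_surjective, pmap_bbNeg, pmap_bbAnd, pmap_bbOr, bbDes_iff_acDes_pmap⟩
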